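/- Let n ≥ 3 be odd, k ≤ d, E ⊆ ℤ_n^d. If |E| ≫ √(τ(n))·n^{d + (k−1)/2} / γ(n)^{(d−1)/2}, then (1/|E|^k) ∑_{y¹,...,y^k ∈ E} |Π_{y¹,...,y^k}(E)| ≫ n^k, where Π_{y¹,...,y^k}(E) = {(x·y¹,...,x·y^k) : x ∈ E} ⊆ ℤ_n^k. -/

import Mathlib

open Finset

noncomputable def chi (n : ℕ) (t : ZMod n) : ℂ :=
  Complex.exp (2 * Real.pi * Complex.I * (t.val : ℂ) / (n : ℂ))

def dot {n d : ℕ} (x y : Fin d → ZMod n) : ZMod n := ∑ i, x i * y i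

def nrm {n d : ℕ} (z : Fin d → ZMod n) : ZMod n := ∑ i, z i ^ 2

noncomputable def ft (n d : ℕ) [NeZero n] (f : (Fin d → ZMod n) → ℂ)
    (m : Fin d → ZMod n) : ℂ :=
  (n : ℂ)⁻¹ ^ d * ∑ x : Fin d → ZMod n, f x * chi n (-(dot x m))

set_option linter.unusedSectionVars false
set_option maxHeartbeats 1000000

section chiLemmas
variable {n : ℕ} [NeZero n]

omit [NeZero n] in
lemma chi_zero : chi n 0 = 1 := by
  simp [chi, ZMod.val_zero]

lemma chi_add (a b : ZMod n) : chi n (a + b) = chi n a * chi n b := by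
  have hn : (n : ℂ) ≠ 0 := Nat.cast_ne_zero.2 (NeZero.ne n)
  set q := (a.val + b.val) / n with hq
  have hdiv : a.val + b.val = n * q + (a + b).val := by
    rw [ZMod.val_add]; exact (Nat.div_add_mod _ n).symm
  have hABC : (a.val : ℂ) + (b.val : ℂ) = (n : ℂ) * (q : ℂ) + ((a + b).val : ℂ) := by
    have := congrArg (Nat.cast : ℕ → ℂ) hdiv
    rwa [Nat.cast_add, Nat.cast_add, Nat.cast_mul] at this
  rw [chi, chi, chi, ← Complex.exp_add]
  have key : 2 * Real.pi * Complex.I * ((a:ZMod n).val : ℂ) / n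
        + 2 * Real.pi * Complex.I * ((b:ZMod n).val : ℂ) / n
      = 2 * Real.pi * Complex.I * (((a+b)).val : ℂ) / n + (q : ℂ) * (2 * Real.pi * Complex.I) := by
    rw [← add_div, ← mul_add, hABC]
    field_simp
    ring
  rw [key, Complex.exp_add]
  have h1 : Complex.exp ((q : ℂ) * (2 * Real.pi * Complex.I)) = 1 := by
    have : ((q : ℕ) : ℂ) = ((q : ℤ) : ℂ) := by push_cast; ring
    rw [this, Complex.exp_int_mul_two_pi_mul_I]
  rw [h1, mul_one]

lemma chi_sub_conj (a b : ZMod n) :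
    chi n (a - b) = chi n a * (starRingEnd ℂ) (chi n b) := by
  have hconj : chi n b * (starRingEnd ℂ) (chi n b) = 1 := by
    rw [Complex.mul_conj]
    have : ‖chi n b‖ = 1 := by
      rw [chi]
      have : 2 * ↑Real.pi * Complex.I * ((b:ZMod n).val : ℂ) / n
          = ((2 * Real.pi * b.val / n : ℝ) : ℂ) * Complex.I := by push_cast; ring
      rw [this, Complex.norm_exp_ofReal_mul_I]
    rw [← Complex.sq_norm, this]
    norm_num
  calc chi n (a - b) = chi n (a - b) * (chi n b * (starRingEnd ℂ) (chi n b)) := by rw [hconj, mul_one]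
    _ = (chi n (a - b + b)) * (starRingEnd ℂ) (chi n b) := by rw [chi_add]; ring
    _ = chi n a * (starRingEnd ℂ) (chi n b) := by rw [sub_add_cancel]


lemma chi_ne_one (a : ZMod n) (ha : a ≠ 0) : chi n a ≠ 1 := by
  have hn : 0 < n := Nat.pos_of_ne_zero (NeZero.ne n)
  intro h
  rw [chi, Complex.exp_eq_one_iff] at h
  obtain ⟨m, hm⟩ := h
  have hn' : (n : ℂ) ≠ 0 := Nat.cast_ne_zero.2 (NeZero.ne n)
  have h2 : (2 : ℂ) * Real.pi * Complex.I ≠ 0 := by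
    simp [Real.pi_ne_zero, Complex.I_ne_zero]
  have hm' : ((a.val : ℂ) / n) * (2 * Real.pi * Complex.I) = (m : ℂ) * (2 * Real.pi * Complex.I) := by
    linear_combination hm
  have hv2 : (a.val : ℂ) / n = (m : ℂ) := mul_right_cancel₀ h2 hm'
  rw [div_eq_iff hn'] at hv2
  have hz : (a.val : ℤ) = m * n := by exact_mod_cast hv2
  have hv : 0 < a.val := Nat.pos_of_ne_zero (fun h0 => ha (by rwa [← ZMod.val_eq_zero]))
  have h1 : (a.val : ℤ) < n := by exact_mod_cast ZMod.val_lt a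
  have h0 : (0:ℤ) < a.val := by exact_mod_cast hv
  have hn0 : (0:ℤ) < n := by exact_mod_cast hn
  rcases le_or_gt m 0 with hc | hc
  · nlinarith
  · nlinarith

lemma chi_sum {ι : Type*} (s : Finset ι) (f : ι → ZMod n) :
    chi n (∑ i ∈ s, f i) = ∏ i ∈ s, chi n (f i) := by
  classical
  induction s using Finset.cons_induction with
  | empty => simp [chi_zero]
  | cons a s ha ih => rw [Finset.sum_cons, Finset.prod_cons, chi_add, ih]

lemma sum_chi_mul (a : ZMod n) :
    ∑ t : ZMod n, chi n (a * t) = if a = 0 then (n : ℂ) else 0 := by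
  split_ifs with h
  · subst h; simp [chi_zero, ZMod.card]
  · have key : chi n a * ∑ t : ZMod n, chi n (a * t) = ∑ t : ZMod n, chi n (a * t) := by
      rw [Finset.mul_sum]
      calc ∑ t : ZMod n, chi n a * chi n (a * t)
          = ∑ t : ZMod n, chi n (a * (1 + t)) := by
            apply Finset.sum_congr rfl; intro t _
            rw [mul_add, mul_one, chi_add]
        _ = ∑ t : ZMod n, chi n (a * t) := by
            exact Fintype.sum_equiv (Equiv.addLeft (1 : ZMod n)) _ _ (fun t => by simp)
    have h2 : (chi n a - 1) * ∑ t : ZMod n, chi n (a * t) = 0 := by linear_combination key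
    rcases mul_eq_zero.1 h2 with h1 | h1
    · exact absurd (by linear_combination h1) (chi_ne_one a h)
    · exact h1

lemma sum_chi_dot {m : ℕ} (z : Fin m → ZMod n) :
    ∑ w : Fin m → ZMod n, chi n (∑ i, z i * w i) = if z = 0 then ((n : ℂ)) ^ m else 0 := by
  classical
  have : ∑ w : Fin m → ZMod n, chi n (∑ i, z i * w i)
      = ∑ w ∈ Fintype.piFinset (fun _ : Fin m => (univ : Finset (ZMod n))), ∏ i, chi n (z i * w i) := by
    rw [Fintype.piFinset_univ]
    exact Finset.sum_congr rfl fun w _ => chi_sum _ _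
  have hps := Finset.prod_univ_sum (κ := fun _ : Fin m => ZMod n)
    (fun _ => (univ : Finset (ZMod n))) (fun i t => chi n (z i * t))
  rw [this, ← hps]
  split_ifs with h
  · subst h
    simp only [Pi.zero_apply]
    rw [Finset.prod_congr rfl (fun i _ => sum_chi_mul 0)]
    simp [ZMod.card]
  · obtain ⟨i, hi⟩ : ∃ i, z i ≠ 0 := by
      by_contra hc; push_neg at hc; exact h (funext hc)
    apply Finset.prod_eq_zero (Finset.mem_univ i)
    rw [sum_chi_mul, if_neg hi]

end chiLemmas

section split
variable {ι α M : Type*} [Fintype ι] [DecidableEq ι] [DecidableEq α] [AddCommMonoid M]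

lemma sum_update_split (E : Finset α) (d0 : α) (j : ι) (F : (ι → α) → M) :
    ∑ y ∈ Fintype.piFinset (fun _ : ι => E), F y
      = ∑ z ∈ Fintype.piFinset (fun i => if i = j then ({d0} : Finset α) else E),
          ∑ a ∈ E, F (Function.update z j a) := by
  calc ∑ y ∈ Fintype.piFinset (fun _ : ι => E), F y
      = ∑ p ∈ (Fintype.piFinset (fun i => if i = j then ({d0} : Finset α) else E)) ×ˢ E,
          F (Function.update p.1 j p.2) := by
        apply Finset.sum_nbij' (i := fun y => (Function.update y j d0, y j))
          (j := fun p => Function.update p.1 j p.2)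
        · intro y hy
          rw [Fintype.mem_piFinset] at hy
          rw [Finset.mem_product]
          refine ⟨?_, hy j⟩
          rw [Fintype.mem_piFinset]
          intro i
          by_cases h : i = j
          · subst h; simp
          · simp [Function.update_of_ne h, h, hy i]
        · intro p hp
          rw [Finset.mem_product] at hp
          obtain ⟨h1, h2⟩ := hp
          rw [Fintype.mem_piFinset] at h1 ⊢
          intro i
          by_cases h : i = j
          · subst h; simpa using h2
          · have := h1 i
            simp [h] at this
            simpa [Function.update_of_ne h] using this
        · intro y hy
          simp [Function.update_idem, Function.update_eq_self]
        · intro p hp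
          rw [Finset.mem_product] at hp
          obtain ⟨h1, h2⟩ := hp
          rw [Fintype.mem_piFinset] at h1
          have hj := h1 j
          simp at hj
          have : Function.update (Function.update p.1 j p.2) j d0 = p.1 := by
            rw [Function.update_idem, ← hj, Function.update_eq_self]
          rw [Prod.ext_iff]
          exact ⟨this, by simp⟩
        · intro y hy
          simp [Function.update_idem, Function.update_eq_self]
    _ = _ := Finset.sum_product _ _ _

end split


section gcdLemmas
variable {n : ℕ} [NeZero n]


lemma card_val_dvd_le (e : ℕ) (he : e ∣ n) :
    (univ.filter (fun c : ZMod n => e ∣ c.val)).card ≤ n / e := by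
  have hn : 0 < n := Nat.pos_of_ne_zero (NeZero.ne n)
  have he0 : 0 < e := Nat.pos_of_dvd_of_pos he hn
  calc (univ.filter (fun c : ZMod n => e ∣ c.val)).card
      ≤ (Finset.range (n / e)).card := ?_
    _ = n / e := Finset.card_range _
  apply Finset.card_le_card_of_injOn (fun c => c.val / e)
  · intro c hc
    rw [Finset.mem_coe, Finset.mem_filter] at hc
    rw [Finset.mem_coe, Finset.mem_range]
    exact Nat.div_lt_div_of_lt_of_dvd he (ZMod.val_lt c)
  · intro c hc c' hc' h
    simp only [Finset.coe_filter, Set.mem_setOf_eq] at hc hc'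
    simp only at h
    have : c.val = c'.val := by
      rw [← Nat.div_mul_cancel hc.2, ← Nat.div_mul_cancel hc'.2, h]
    exact ZMod.val_injective n this

lemma mul_fiber_card_le (c b : ZMod n) :
    (univ.filter (fun t : ZMod n => c * t = b)).card ≤ n.gcd c.val := by
  have hn : 0 < n := Nat.pos_of_ne_zero (NeZero.ne n)
  set g := n.gcd c.val with hg
  have hg0 : 0 < g := Nat.gcd_pos_of_pos_left _ hn
  have hgn : g ∣ n := Nat.gcd_dvd_left _ _
  rcases Finset.eq_empty_or_nonempty (univ.filter (fun t : ZMod n => c * t = b)) with h | ⟨t0, ht0⟩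
  · rw [h]; simp
  · rw [Finset.mem_filter] at ht0
    -- kernel bound
    have hker : ∀ t : ZMod n, c * t = 0 → (n / g) ∣ t.val := by
      intro t ht
      have h1 : (((c.val * t.val : ℕ)) : ZMod n) = 0 := by
        push_cast
        rw [ZMod.natCast_rightInverse c, ZMod.natCast_rightInverse t, ht]
      rw [ZMod.natCast_eq_zero_iff] at h1
      -- n ∣ c.val * t.val
      have hco := Nat.coprime_div_gcd_div_gcd (m := n) (n := c.val) hg0
      obtain ⟨a, ha⟩ := Nat.gcd_dvd_right n c.val
      obtain ⟨m, hmm⟩ := hgn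
      have hmg : n / g = m := by rw [hmm, Nat.mul_div_cancel_left _ hg0]
      have hag : c.val / g = a := by rw [ha, Nat.mul_div_cancel_left _ hg0]
      rw [hmg]
      rw [hmg, hag] at hco
      have h2 : m ∣ a * t.val := by
        have h1' : g * m ∣ g * (a * t.val) := by
          rw [← hmm, ← mul_assoc, ← ha]; exact h1
        exact (Nat.mul_dvd_mul_iff_left hg0).1 h1'
      exact hco.dvd_of_dvd_mul_left h2
    have hsub : (univ.filter (fun t : ZMod n => c * t = b)).card
        ≤ (univ.filter (fun t : ZMod n => (n / g) ∣ t.val)).card := by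
      apply Finset.card_le_card_of_injOn (fun t => t - t0)
      · intro t ht
        rw [Finset.mem_coe, Finset.mem_filter] at ht
        rw [Finset.mem_coe, Finset.mem_filter]
        refine ⟨Finset.mem_univ _, hker _ ?_⟩
        rw [mul_sub, ht.2, ht0.2, sub_self]
      · intro x _ y _ h
        exact sub_left_injective h
    refine hsub.trans ?_
    have := card_val_dvd_le (n := n) (n / g) (Nat.div_dvd_of_dvd hgn)
    rwa [Nat.div_div_self hgn (NeZero.ne n)] at this

lemma affine_fiber_card_le {d : ℕ} (c : ZMod n) (v w : Fin d → ZMod n) :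
    (univ.filter (fun u : Fin d → ZMod n => (fun l => c * u l + v l) = w)).card
      ≤ (n.gcd c.val) ^ d := by
  have heq : (univ.filter (fun u : Fin d → ZMod n => (fun l => c * u l + v l) = w))
      = Fintype.piFinset (fun l => univ.filter (fun t : ZMod n => c * t = w l - v l)) := by
    ext u
    simp only [Finset.mem_filter, Finset.mem_univ, true_and, Fintype.mem_piFinset, funext_iff]
    constructor
    · intro h l; rw [eq_sub_iff_add_eq]; exact h l
    · intro h l; have := h l; rw [eq_sub_iff_add_eq] at this; exact this
  rw [heq, Fintype.card_piFinset]
  calc ∏ l, (univ.filter (fun t : ZMod n => c * t = w l - v l)).card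
      ≤ ∏ _l : Fin d, n.gcd c.val := Finset.prod_le_prod' (fun l _ => mul_fiber_card_le c (w l - v l))
    _ = (n.gcd c.val) ^ d := by rw [Finset.prod_const]; simp

lemma sum_comp_affine_le {d : ℕ} (c : ZMod n) (v : Fin d → ZMod n)
    (f : (Fin d → ZMod n) → ℝ) (hf : ∀ w, 0 ≤ f w) :
    ∑ u : Fin d → ZMod n, f (fun l => c * u l + v l)
      ≤ ((n.gcd c.val : ℝ)) ^ d * ∑ w : Fin d → ZMod n, f w := by
  classical
  rw [Finset.sum_comp f (fun (u : Fin d → ZMod n) l => c * u l + v l)]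
  calc ∑ b ∈ Finset.image (fun (u : Fin d → ZMod n) l => c * u l + v l) univ,
        (univ.filter (fun u : Fin d → ZMod n => (fun l => c * u l + v l) = b)).card • f b
      ≤ ∑ b ∈ Finset.image (fun (u : Fin d → ZMod n) l => c * u l + v l) univ,
        ((n.gcd c.val : ℝ)) ^ d * f b := by
        apply Finset.sum_le_sum
        intro b _
        rw [nsmul_eq_mul]
        apply mul_le_mul_of_nonneg_right _ (hf b)
        calc ((univ.filter (fun u : Fin d → ZMod n => (fun l => c * u l + v l) = b)).card : ℝ)
            ≤ ((n.gcd c.val ^ d : ℕ) : ℝ) := by exact_mod_cast affine_fiber_card_le c v b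
          _ = _ := by push_cast; ring
    _ ≤ ∑ b : Fin d → ZMod n, ((n.gcd c.val : ℝ)) ^ d * f b := by
        apply Finset.sum_le_sum_of_subset_of_nonneg (Finset.subset_univ _)
        intro b _ _
        exact mul_nonneg (by positivity) (hf b)
    _ = _ := by rw [← Finset.mul_sum]

lemma sum_gcd_le : ∑ c : ZMod n, n.gcd c.val ≤ n * n.divisors.card := by
  have hn : 0 < n := Nat.pos_of_ne_zero (NeZero.ne n)
  calc ∑ c : ZMod n, n.gcd c.val
      ≤ ∑ c : ZMod n, ∑ e ∈ n.divisors.filter (· ∣ c.val), e := by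
        apply Finset.sum_le_sum
        intro c _
        apply Finset.single_le_sum (fun e _ => Nat.zero_le e)
        rw [Finset.mem_filter, Nat.mem_divisors]
        exact ⟨⟨Nat.gcd_dvd_left _ _, NeZero.ne n⟩, Nat.gcd_dvd_right _ _⟩
    _ = ∑ c : ZMod n, ∑ e ∈ n.divisors, if e ∣ c.val then e else 0 := by
        apply Finset.sum_congr rfl; intro c _; rw [Finset.sum_filter]
    _ = ∑ e ∈ n.divisors, ∑ c : ZMod n, if e ∣ c.val then e else 0 := Finset.sum_comm
    _ ≤ ∑ e ∈ n.divisors, n := by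
        apply Finset.sum_le_sum
        intro e he
        rw [Nat.mem_divisors] at he
        have he0 : 0 < e := Nat.pos_of_dvd_of_pos he.1 hn
        calc ∑ c : ZMod n, (if e ∣ c.val then e else 0)
            = (univ.filter (fun c : ZMod n => e ∣ c.val)).card * e := by
              rw [Finset.sum_ite, Finset.sum_const, Finset.sum_const_zero, add_zero, smul_eq_mul]
          _ ≤ (n / e) * e := Nat.mul_le_mul_right e (card_val_dvd_le e he.1)
          _ = n := Nat.div_mul_cancel he.1
    _ = n.divisors.card * n := Finset.sum_const _
    _ = n * n.divisors.card := Nat.mul_comm _ _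

lemma proper_div_minFac (g : ℕ) (hg : g ∣ n) (hlt : g < n) : g * n.minFac ≤ n := by
  have hn : 0 < n := Nat.pos_of_ne_zero (NeZero.ne n)
  have hg0 : 0 < g := Nat.pos_of_dvd_of_pos hg hn
  set m := n / g with hm
  have hmn : g * m = n := Nat.mul_div_cancel' hg
  have hm1 : 1 < m := by
    rcases Nat.lt_or_ge 1 m with h | h
    · exact h
    · interval_cases m
      · omega
      · omega
  have hmdvd : m ∣ n := Nat.div_dvd_of_dvd hg
  have : n.minFac ≤ m := by
    have h2 : 2 ≤ m.minFac := (Nat.minFac_prime (by omega)).two_le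
    have := Nat.minFac_le_of_dvd h2 ((Nat.minFac_dvd m).trans hmdvd)
    exact this.trans (Nat.minFac_le (by omega))
  calc g * n.minFac ≤ g * m := Nat.mul_le_mul_left g this
    _ = n := hmn

lemma gcd_lt_of_ne_zero (c : ZMod n) (hc : c ≠ 0) : n.gcd c.val < n := by
  have hv : 0 < c.val := Nat.pos_of_ne_zero (fun h => hc ((ZMod.val_eq_zero c).1 h))
  calc n.gcd c.val ≤ c.val := Nat.le_of_dvd hv (Nat.gcd_dvd_right _ _)
    _ < n := ZMod.val_lt c

lemma sum_gcd_pow_le (d : ℕ) :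
    n.minFac ^ (d-1) * ∑ c ∈ univ.filter (· ≠ (0:ZMod n)), (n.gcd c.val)^d
      ≤ n^(d-1) * (n * n.divisors.card) := by
  have hn : 0 < n := Nat.pos_of_ne_zero (NeZero.ne n)
  have hτ : 1 ≤ n.divisors.card :=
    Finset.card_pos.2 ⟨n, Nat.mem_divisors_self n (NeZero.ne n)⟩
  rcases Nat.eq_zero_or_pos d with rfl | hd
  · simp only [Nat.zero_sub, pow_zero, one_mul]
    calc ∑ c ∈ univ.filter (· ≠ (0:ZMod n)), 1
        = (univ.filter (· ≠ (0:ZMod n))).card := (Finset.card_eq_sum_ones _).symm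
      _ ≤ (univ : Finset (ZMod n)).card := Finset.card_filter_le _ _
      _ = n := by rw [Finset.card_univ, ZMod.card]
      _ ≤ n * n.divisors.card := Nat.le_mul_of_pos_right n hτ
  · rw [Finset.mul_sum]
    have hper : ∀ c ∈ univ.filter (· ≠ (0:ZMod n)),
        n.minFac ^ (d-1) * (n.gcd c.val)^d ≤ n^(d-1) * n.gcd c.val := by
      intro c hc
      rw [Finset.mem_filter] at hc
      have hlt := gcd_lt_of_ne_zero c hc.2
      have hdvd : n.gcd c.val ∣ n := Nat.gcd_dvd_left _ _
      have hmul := proper_div_minFac (n := n) (n.gcd c.val) hdvd hlt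
      calc n.minFac ^ (d-1) * (n.gcd c.val)^d
          = (n.gcd c.val * n.minFac) ^ (d-1) * n.gcd c.val := by
            have hgd : (n.gcd c.val)^d = (n.gcd c.val)^(d-1) * n.gcd c.val := by
              conv_lhs => rw [show d = (d-1)+1 from by omega]
              rw [pow_succ]
            rw [hgd, mul_pow]
            ring
        _ ≤ n ^ (d-1) * n.gcd c.val :=
            Nat.mul_le_mul_right _ (Nat.pow_le_pow_left hmul _)
    calc ∑ c ∈ univ.filter (· ≠ (0:ZMod n)), n.minFac ^ (d-1) * (n.gcd c.val)^d
        ≤ ∑ c ∈ univ.filter (· ≠ (0:ZMod n)), n^(d-1) * n.gcd c.val := Finset.sum_le_sum hper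
      _ ≤ ∑ c : ZMod n, n^(d-1) * n.gcd c.val :=
          Finset.sum_le_sum_of_subset (Finset.filter_subset _ _)
      _ = n^(d-1) * ∑ c : ZMod n, n.gcd c.val := by rw [Finset.mul_sum]
      _ ≤ n^(d-1) * (n * n.divisors.card) := Nat.mul_le_mul_left _ sum_gcd_le

end gcdLemmas

lemma fiber_sq_eq {α β : Type*} [DecidableEq α] [DecidableEq β] [Fintype β] (E : Finset α) (m : α → β) :
    ∑ b : β, ((E.filter (fun x => m x = b)).card) ^ 2
      = ((E ×ˢ E).filter (fun p => m p.1 = m p.2)).card := by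
  rw [Finset.card_eq_sum_card_fiberwise
    (f := fun p => m p.1) (t := univ) (fun p _ => Finset.mem_univ _)]
  apply Finset.sum_congr rfl
  intro b _
  have : ((E ×ˢ E).filter (fun p => m p.1 = m p.2)).filter (fun p => m p.1 = b)
      = (E.filter (fun x => m x = b)) ×ˢ (E.filter (fun x => m x = b)) := by
    ext p
    simp only [Finset.mem_filter, Finset.mem_product]
    constructor
    · rintro ⟨⟨⟨h1, h2⟩, h3⟩, h4⟩
      exact ⟨⟨h1, h4⟩, ⟨h2, h3 ▸ h4⟩⟩
    · rintro ⟨⟨h1, h2⟩, ⟨h3, h4⟩⟩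
      exact ⟨⟨⟨h1, h3⟩, by rw [h2, h4]⟩, h2⟩
  rw [this, Finset.card_product, sq]

lemma fiber_sum_eq {α β : Type*} [DecidableEq α] [DecidableEq β] [Fintype β] (E : Finset α) (m : α → β) :
    ∑ b : β, ((E.filter (fun x => m x = b)).card) = E.card :=
  (Finset.card_eq_sum_card_fiberwise (f := m) (t := univ) (fun x _ => Finset.mem_univ _)).symm

lemma cs_count {α β ι : Type*} [DecidableEq α] [DecidableEq β] [Fintype β]
    (Y : Finset ι) (E : Finset α) (m : ι → α → β) :
    ((Y.card : ℝ) * E.card) ^ 2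
      ≤ (∑ y ∈ Y, (((E ×ˢ E).filter (fun p => m y p.1 = m y p.2)).card : ℝ))
        * (∑ y ∈ Y, ((E.image (m y)).card : ℝ)) := by
  classical
  set s := Y ×ˢ (univ : Finset β) with hs
  set f : ι × β → ℝ := fun p => ((E.filter (fun x => m p.1 x = p.2)).card : ℝ) with hf
  set g : ι × β → ℝ := fun p => if p.2 ∈ E.image (m p.1) then (1:ℝ) else 0 with hg
  have h := Finset.sum_mul_sq_le_sq_mul_sq s f g
  have hfg : ∑ p ∈ s, f p * g p = (Y.card : ℝ) * E.card := by
    rw [hs, Finset.sum_product]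
    have : ∀ y ∈ Y, ∑ b : β, f (y, b) * g (y, b) = (E.card : ℝ) := by
      intro y _
      have hterm : ∀ b : β, f (y, b) * g (y, b) = f (y, b) := by
        intro b
        by_cases hb : b ∈ E.image (m y)
        · simp only [hg, if_pos hb, mul_one]
        · have : E.filter (fun x => m y x = b) = ∅ := by
            rw [Finset.filter_eq_empty_iff]
            intro x hx hc
            exact hb (Finset.mem_image.2 ⟨x, hx, hc⟩)
          simp [hf, hg, hb, this]
      rw [Finset.sum_congr rfl (fun b _ => hterm b)]
      rw [hf]
      simp only
      rw [← Nat.cast_sum]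
      rw [fiber_sum_eq E (m y)]
    rw [Finset.sum_congr rfl this, Finset.sum_const, nsmul_eq_mul]
  have hf2 : ∑ p ∈ s, f p ^ 2 = ∑ y ∈ Y, (((E ×ˢ E).filter (fun p => m y p.1 = m y p.2)).card : ℝ) := by
    rw [hs, Finset.sum_product]
    apply Finset.sum_congr rfl
    intro y _
    have := fiber_sq_eq E (m y)
    have hcast := congrArg (Nat.cast : ℕ → ℝ) this
    push_cast at hcast
    exact hcast
  have hg2 : ∑ p ∈ s, g p ^ 2 = ∑ y ∈ Y, ((E.image (m y)).card : ℝ) := by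
    rw [hs, Finset.sum_product]
    apply Finset.sum_congr rfl
    intro y _
    simp only [hg, sq, ite_mul, one_mul, zero_mul, if_pos, Finset.sum_ite_mem,
      Finset.univ_inter, Finset.inter_self, Finset.sum_const, nsmul_eq_mul, mul_one]
  calc ((Y.card : ℝ) * E.card) ^ 2 = (∑ p ∈ s, f p * g p) ^ 2 := by rw [hfg]
    _ ≤ (∑ p ∈ s, f p ^ 2) * (∑ p ∈ s, g p ^ 2) := Finset.sum_mul_sq_le_sq_mul_sq s f g
    _ = _ := by rw [hf2, hg2]

section main
variable {n d k : ℕ} [NeZero n]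

noncomputable def SE (E : Finset (Fin d → ZMod n)) (w : Fin d → ZMod n) : ℂ :=
  ∑ x ∈ E, chi n (dot x w)

lemma dot_smul_sum (s : Fin k → ZMod n) (y : Fin k → (Fin d → ZMod n)) (x : Fin d → ZMod n) :
    ∑ i, s i * dot x (y i) = dot x (fun l => ∑ i, s i * y i l) := by
  unfold dot
  simp only [Finset.mul_sum]
  rw [Finset.sum_comm]
  apply Finset.sum_congr rfl
  intro l _
  apply Finset.sum_congr rfl
  intro i _
  ring

lemma dot_sub (x x' w : Fin d → ZMod n) : dot x w - dot x' w = dot (x - x') w := by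
  unfold dot
  rw [← Finset.sum_sub_distrib]
  apply Finset.sum_congr rfl
  intro l _
  simp [sub_mul]

lemma parseval (E : Finset (Fin d → ZMod n)) :
    ∑ w : Fin d → ZMod n, (Complex.normSq (SE E w) : ℝ) = (n:ℝ)^d * E.card := by
  have hC : ∑ w : Fin d → ZMod n, ((Complex.normSq (SE E w) : ℝ) : ℂ)
      = Complex.ofReal ((n:ℝ)^d * E.card) := by
    have hterm : ∀ w, ((Complex.normSq (SE E w) : ℝ) : ℂ)
        = ∑ x ∈ E, ∑ x' ∈ E, chi n (dot (x - x') w) := by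
      intro w
      rw [← Complex.mul_conj, SE, Finset.sum_mul]
      apply Finset.sum_congr rfl
      intro x _
      rw [map_sum, Finset.mul_sum]
      apply Finset.sum_congr rfl
      intro x' _
      rw [← chi_sub_conj, dot_sub]
    rw [Finset.sum_congr rfl (fun w _ => hterm w), Finset.sum_comm]
    have hx : ∀ x ∈ E, ∑ w : Fin d → ZMod n, ∑ x' ∈ E, chi n (dot (x - x') w)
        = (n:ℂ)^d := by
      intro x hx
      rw [Finset.sum_comm]
      have : ∀ x' ∈ E, ∑ w : Fin d → ZMod n, chi n (dot (x - x') w)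
          = if x - x' = 0 then ((n:ℂ))^d else 0 := by
        intro x' _
        rw [← sum_chi_dot (x - x')]
        rfl
      rw [Finset.sum_congr rfl this]
      have : ∀ x' ∈ E, (if x - x' = 0 then ((n:ℂ))^d else 0) = if x' = x then ((n:ℂ))^d else 0 := by
        intro x' _
        congr 1
        simp [sub_eq_zero, eq_comm]
      rw [Finset.sum_congr rfl this, Finset.sum_ite_eq' E x (fun _ => ((n:ℂ))^d), if_pos hx]
    rw [Finset.sum_congr rfl hx, Finset.sum_const, nsmul_eq_mul]
    push_cast
    ring
  rw [← Complex.ofReal_sum] at hC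
  exact Complex.ofReal_inj.mp hC

-- the weight vector
def wv (s : Fin k → ZMod n) (y : Fin k → (Fin d → ZMod n)) : Fin d → ZMod n :=
  fun l => ∑ i, s i * y i l

lemma per_y_identity (E : Finset (Fin d → ZMod n)) (y : Fin k → (Fin d → ZMod n)) :
    (n:ℝ)^k * (((E ×ˢ E).filter
        (fun p => (fun i : Fin k => dot p.1 (y i)) = (fun i : Fin k => dot p.2 (y i)))).card : ℝ)
      = ∑ s : Fin k → ZMod n, (Complex.normSq (SE E (wv s y)) : ℝ) := by
  have hC : Complex.ofReal ((n:ℝ)^k * (((E ×ˢ E).filter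
        (fun p => (fun i : Fin k => dot p.1 (y i)) = (fun i : Fin k => dot p.2 (y i)))).card : ℝ))
      = ∑ s : Fin k → ZMod n, ((Complex.normSq (SE E (wv s y)) : ℝ) : ℂ) := by
    have step1 : Complex.ofReal ((n:ℝ)^k * (((E ×ˢ E).filter
          (fun p => (fun i : Fin k => dot p.1 (y i)) = (fun i : Fin k => dot p.2 (y i)))).card : ℝ))
        = ∑ p ∈ E ×ˢ E, (if (fun i : Fin k => dot p.1 (y i)) = (fun i : Fin k => dot p.2 (y i))
            then ((n:ℂ))^k else 0) := by
      rw [Finset.sum_ite, Finset.sum_const, Finset.sum_const_zero, add_zero, nsmul_eq_mul]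
      push_cast
      ring
    rw [step1]
    have step2 : ∀ p ∈ E ×ˢ E,
        (if (fun i : Fin k => dot p.1 (y i)) = (fun i : Fin k => dot p.2 (y i))
            then ((n:ℂ))^k else 0)
        = ∑ s : Fin k → ZMod n, chi n (∑ i, s i * (dot p.1 (y i) - dot p.2 (y i))) := by
      intro p _
      have hcomm : (∑ s : Fin k → ZMod n, chi n (∑ i, s i * (dot p.1 (y i) - dot p.2 (y i))))
          = ∑ s : Fin k → ZMod n, chi n (∑ i, (dot p.1 (y i) - dot p.2 (y i)) * s i) :=
        Finset.sum_congr rfl (fun s _ => by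
          congr 1; exact Finset.sum_congr rfl (fun i _ => mul_comm _ _))
      rw [hcomm, sum_chi_dot (fun i => dot p.1 (y i) - dot p.2 (y i))]
      have hiff : ((fun i => dot p.1 (y i) - dot p.2 (y i)) = 0)
          ↔ ((fun i : Fin k => dot p.1 (y i)) = fun i => dot p.2 (y i)) := by
        simp only [funext_iff, Pi.zero_apply, sub_eq_zero]
      rw [if_congr hiff rfl rfl]
    rw [Finset.sum_congr rfl step2, Finset.sum_comm]
    apply Finset.sum_congr rfl
    intro s _
    have hterm : ∀ p ∈ E ×ˢ E, chi n (∑ i, s i * (dot p.1 (y i) - dot p.2 (y i)))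
        = chi n (dot p.1 (wv s y)) * (starRingEnd ℂ) (chi n (dot p.2 (wv s y))) := by
      intro p _
      rw [← chi_sub_conj]
      congr 1
      have : ∑ i, s i * (dot p.1 (y i) - dot p.2 (y i))
          = ∑ i, s i * dot p.1 (y i) - ∑ i, s i * dot p.2 (y i) := by
        rw [← Finset.sum_sub_distrib]
        exact Finset.sum_congr rfl (fun i _ => by ring)
      rw [this, dot_smul_sum, dot_smul_sum]
      rfl
    rw [Finset.sum_congr rfl hterm]
    rw [← Complex.mul_conj, SE]
    rw [Finset.sum_product]
    rw [Finset.sum_mul]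
    apply Finset.sum_congr rfl
    intro x _
    rw [map_sum, Finset.mul_sum]
  rw [← Complex.ofReal_sum] at hC
  exact Complex.ofReal_inj.mp hC

lemma T_bound (E : Finset (Fin d → ZMod n)) (s : Fin k → ZMod n) (j : Fin k) :
    ∑ y ∈ Fintype.piFinset (fun _ : Fin k => E), (Complex.normSq (SE E (wv s y)) : ℝ)
      ≤ (E.card : ℝ)^(k-1) * ((n.gcd (s j).val : ℝ))^d * ((n:ℝ)^d * E.card) := by
  classical
  rw [sum_update_split E (0 : Fin d → ZMod n) j
    (fun y => (Complex.normSq (SE E (wv s y)) : ℝ))]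
  have hinner : ∀ z, ∑ a ∈ E, (Complex.normSq (SE E (wv s (Function.update z j a))) : ℝ)
      ≤ ((n.gcd (s j).val : ℝ))^d * ((n:ℝ)^d * E.card) := by
    intro z
    have hw : ∀ a, wv s (Function.update z j a)
        = fun l => s j * a l + (∑ i ∈ univ.erase j, s i * z i l) := by
      intro a
      funext l
      rw [wv]
      rw [← Finset.add_sum_erase _ _ (Finset.mem_univ j)]
      congr 1
      · rw [Function.update_self]
      · apply Finset.sum_congr rfl
        intro i hi
        rw [Function.update_of_ne (Finset.mem_erase.1 hi).1]
    calc ∑ a ∈ E, (Complex.normSq (SE E (wv s (Function.update z j a))) : ℝ)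
        ≤ ∑ a : Fin d → ZMod n, (Complex.normSq (SE E (wv s (Function.update z j a))) : ℝ) := by
          apply Finset.sum_le_sum_of_subset_of_nonneg (Finset.subset_univ E)
          intro b _ _
          exact Complex.normSq_nonneg _
      _ = ∑ a : Fin d → ZMod n, (Complex.normSq (SE E
            (fun l => s j * a l + (∑ i ∈ univ.erase j, s i * z i l))) : ℝ) := by
          exact Finset.sum_congr rfl (fun a _ => by rw [hw a])
      _ ≤ ((n.gcd (s j).val : ℝ))^d * ∑ w : Fin d → ZMod n, (Complex.normSq (SE E w) : ℝ) :=
          sum_comp_affine_le (s j) _ _ (fun w => Complex.normSq_nonneg _)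
      _ = ((n.gcd (s j).val : ℝ))^d * ((n:ℝ)^d * E.card) := by rw [parseval]
  calc ∑ z ∈ Fintype.piFinset (fun i : Fin k => if i = j then ({(0 : Fin d → ZMod n)} : Finset _) else E),
        ∑ a ∈ E, (Complex.normSq (SE E (wv s (Function.update z j a))) : ℝ)
      ≤ ∑ z ∈ Fintype.piFinset (fun i : Fin k => if i = j then ({(0 : Fin d → ZMod n)} : Finset _) else E),
        ((n.gcd (s j).val : ℝ))^d * ((n:ℝ)^d * E.card) :=
        Finset.sum_le_sum (fun z _ => hinner z)
    _ = ((Fintype.piFinset (fun i : Fin k => if i = j then ({(0 : Fin d → ZMod n)} : Finset _) else E)).card : ℝ)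
          * (((n.gcd (s j).val : ℝ))^d * ((n:ℝ)^d * E.card)) := by
        rw [Finset.sum_const, nsmul_eq_mul]
    _ ≤ (E.card : ℝ)^(k-1) * ((n.gcd (s j).val : ℝ))^d * ((n:ℝ)^d * E.card) := by
        have hcard : (Fintype.piFinset (fun i : Fin k => if i = j then ({(0 : Fin d → ZMod n)} : Finset _) else E)).card
            = E.card ^ (k-1) := by
          rw [Fintype.card_piFinset]
          have : ∀ i : Fin k, ((if i = j then ({(0 : Fin d → ZMod n)} : Finset _) else E)).card
              = if i = j then 1 else E.card := by
            intro i; split_ifs <;> simp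
          rw [Finset.prod_congr rfl (fun i _ => this i)]
          rw [← Finset.mul_prod_erase _ _ (Finset.mem_univ j), if_pos rfl, one_mul]
          have herase : ∀ i ∈ univ.erase j, (if i = j then 1 else E.card) = E.card := by
            intro i hi
            rw [if_neg (Finset.mem_erase.1 hi).1]
          rw [Finset.prod_congr rfl herase, Finset.prod_const, Finset.card_erase_of_mem (Finset.mem_univ j)]
          simp
        rw [hcard]
        push_cast
        exact le_of_eq (by ring)


end main

section final
variable {n d k : ℕ} [NeZero n]

-- coordinate marginal: sum over all tuples of a function of one coordinate
lemma coord_marginal (j : Fin k) (G : ZMod n → ℝ) :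
    ∑ s : Fin k → ZMod n, G (s j) = (n:ℝ)^(k-1) * ∑ c : ZMod n, G c := by
  classical
  have h0 : ∑ s : Fin k → ZMod n, G (s j)
      = ∑ s ∈ Fintype.piFinset (fun _ : Fin k => (univ : Finset (ZMod n))), G (s j) := by
    rw [Fintype.piFinset_univ]
  rw [h0, sum_update_split (univ : Finset (ZMod n)) (0 : ZMod n) j (fun s => G (s j))]
  have hinner : ∀ z : Fin k → ZMod n, ∑ a : ZMod n, G (Function.update z j a j) = ∑ c : ZMod n, G c := by
    intro z
    apply Finset.sum_congr rfl
    intro a _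
    rw [Function.update_self]
  rw [Finset.sum_congr rfl (fun z _ => hinner z), Finset.sum_const, nsmul_eq_mul]
  congr 1
  rw [Fintype.card_piFinset]
  have : ∀ i : Fin k, ((if i = j then ({(0:ZMod n)} : Finset (ZMod n)) else univ)).card
      = if i = j then 1 else n := by
    intro i; split_ifs <;> simp [ZMod.card]
  rw [Finset.prod_congr rfl (fun i _ => this i)]
  rw [← Finset.mul_prod_erase _ _ (Finset.mem_univ j), if_pos rfl, one_mul]
  have herase : ∀ i ∈ univ.erase j, (if i = j then 1 else n) = n := by
    intro i hi; rw [if_neg (Finset.mem_erase.1 hi).1]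
  rw [Finset.prod_congr rfl herase, Finset.prod_const, Finset.card_erase_of_mem (Finset.mem_univ j)]
  push_cast
  simp

lemma S_bound (hk : 1 ≤ k) (hd : 1 ≤ d) (E : Finset (Fin d → ZMod n))
    (hA2 : (k:ℝ) * (n.divisors.card : ℝ) * (n:ℝ)^(2*d+k-1)
        ≤ (E.card : ℝ)^2 * (n.minFac : ℝ)^(d-1)) :
    (n:ℝ)^k * (∑ y ∈ Fintype.piFinset (fun _ : Fin k => E), (((E ×ˢ E).filter
        (fun p => (fun i : Fin k => dot p.1 (y i)) = (fun i : Fin k => dot p.2 (y i)))).card : ℝ))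
      ≤ 2 * (E.card : ℝ)^(k+2) := by
  classical
  set A := (E.card : ℝ) with hA
  have hA0 : 0 ≤ A := Nat.cast_nonneg _
  set P1 := Fintype.piFinset (fun _ : Fin k => E) with hP1
  set T : (Fin k → ZMod n) → ℝ :=
    fun s => ∑ y ∈ P1, (Complex.normSq (SE E (wv s y)) : ℝ) with hT
  have hTnn : ∀ s, 0 ≤ T s := by
    intro s; apply Finset.sum_nonneg; intro y _; exact Complex.normSq_nonneg _
  -- Fourier identity
  have hTid : (n:ℝ)^k * (∑ y ∈ P1, (((E ×ˢ E).filter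
        (fun p => (fun i : Fin k => dot p.1 (y i)) = (fun i : Fin k => dot p.2 (y i)))).card : ℝ))
      = ∑ s : Fin k → ZMod n, T s := by
    rw [Finset.mul_sum]
    rw [Finset.sum_congr rfl (fun y _ => per_y_identity E y)]
    rw [hT]
    exact Finset.sum_comm
  rw [hTid]
  -- split off s = 0
  have hsplit : ∑ s : Fin k → ZMod n, T s = T 0 + ∑ s ∈ univ.erase 0, T s := by
    rw [Finset.add_sum_erase _ _ (Finset.mem_univ 0)]
  -- T 0 = A^(k+2)
  have hT0 : T 0 = A^(k+2) := by
    have hwv : ∀ y : Fin k → (Fin d → ZMod n), wv (0 : Fin k → ZMod n) y = 0 := by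
      intro y; funext l; simp [wv]
    have hSE0 : SE E (0 : Fin d → ZMod n) = (E.card : ℂ) := by
      rw [SE]
      have : ∀ x ∈ E, chi n (dot x (0 : Fin d → ZMod n)) = 1 := by
        intro x _
        have : dot x (0 : Fin d → ZMod n) = 0 := by simp [dot]
        rw [this, chi_zero]
      rw [Finset.sum_congr rfl this, Finset.sum_const, nsmul_eq_mul, mul_one]
    have hns : (Complex.normSq ((E.card : ℂ)) : ℝ) = A^2 := by
      rw [show ((E.card : ℂ)) = Complex.ofReal A from by rw [hA]; push_cast; rfl]
      rw [Complex.normSq_ofReal]; ring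
    rw [hT]
    simp only
    have : ∀ y ∈ P1, (Complex.normSq (SE E (wv (0 : Fin k → ZMod n) y)) : ℝ) = A^2 := by
      intro y _; rw [hwv y, hSE0, hns]
    rw [Finset.sum_congr rfl this, Finset.sum_const, nsmul_eq_mul]
    have hcard : P1.card = E.card ^ k := by
      rw [hP1, Fintype.card_piFinset, Finset.prod_const, Finset.card_univ, Fintype.card_fin]
    rw [hcard]
    push_cast
    ring
  -- bound the rest
  have hrest : ∑ s ∈ univ.erase 0, T s ≤ A^(k+2) := by
    set G : ZMod n → ℝ := fun c => if c ≠ 0 then ((n.gcd c.val : ℝ))^d else 0 with hG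
    have hGnn : ∀ c, 0 ≤ G c := by
      intro c
      rw [hG]
      dsimp only
      split_ifs
      · positivity
      · exact le_rfl
    have step1 : ∑ s ∈ univ.erase 0, T s
        ≤ ∑ j : Fin k, ∑ s : Fin k → ZMod n, (if s j ≠ 0 then T s else 0) := by
      calc ∑ s ∈ univ.erase 0, T s
          ≤ ∑ s ∈ univ.erase 0, ∑ j : Fin k, (if s j ≠ 0 then T s else 0) := by
            apply Finset.sum_le_sum
            intro s hs
            have hs0 : s ≠ 0 := (Finset.mem_erase.1 hs).1
            obtain ⟨j0, hj0⟩ : ∃ j0, s j0 ≠ 0 := by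
              by_contra hc; push_neg at hc; exact hs0 (funext hc)
            have hnn : ∀ j ∈ (univ : Finset (Fin k)), 0 ≤ (fun j => if s j ≠ 0 then T s else 0) j := by
              intro j _
              show (0:ℝ) ≤ if s j ≠ 0 then T s else 0
              split_ifs
              · exact hTnn s
              · exact le_rfl
            have := Finset.single_le_sum (f := fun j => if s j ≠ 0 then T s else 0)
              hnn (Finset.mem_univ j0)
            have heq : (fun j => if s j ≠ 0 then T s else 0) j0 = T s := by
              show (if s j0 ≠ 0 then T s else 0) = T s
              rw [if_pos hj0]
            rwa [if_pos hj0] at this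
        _ ≤ ∑ s : Fin k → ZMod n, ∑ j : Fin k, (if s j ≠ 0 then T s else 0) := by
            apply Finset.sum_le_sum_of_subset_of_nonneg (Finset.subset_univ _)
            intro s _ _
            apply Finset.sum_nonneg
            intro j _
            split_ifs
            · exact hTnn s
            · rfl
        _ = ∑ j : Fin k, ∑ s : Fin k → ZMod n, (if s j ≠ 0 then T s else 0) := Finset.sum_comm
    have step2 : ∀ j : Fin k, ∑ s : Fin k → ZMod n, (if s j ≠ 0 then T s else 0)
        ≤ (A^(k-1) * ((n:ℝ)^d * A)) * ((n:ℝ)^(k-1) * ∑ c : ZMod n, G c) := by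
      intro j
      have hper : ∀ s : Fin k → ZMod n, (if s j ≠ 0 then T s else 0)
          ≤ (A^(k-1) * ((n:ℝ)^d * A)) * G (s j) := by
        intro s
        rw [hG]
        dsimp only
        split_ifs with h
        · have := T_bound E s j
          calc T s ≤ A^(k-1) * ((n.gcd (s j).val : ℝ))^d * ((n:ℝ)^d * A) := this
            _ = A^(k-1) * ((n:ℝ)^d * A) * ((n.gcd (s j).val : ℝ))^d := by ring
        · simp
      calc ∑ s : Fin k → ZMod n, (if s j ≠ 0 then T s else 0)
          ≤ ∑ s : Fin k → ZMod n, (A^(k-1) * ((n:ℝ)^d * A)) * G (s j) :=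
            Finset.sum_le_sum (fun s _ => hper s)
        _ = (A^(k-1) * ((n:ℝ)^d * A)) * ∑ s : Fin k → ZMod n, G (s j) := by
            rw [← Finset.mul_sum]
        _ = (A^(k-1) * ((n:ℝ)^d * A)) * ((n:ℝ)^(k-1) * ∑ c : ZMod n, G c) := by
            rw [coord_marginal j G]
    have hGsum : (n.minFac : ℝ)^(d-1) * ∑ c : ZMod n, G c ≤ (n:ℝ)^(d-1) * ((n:ℝ) * (n.divisors.card : ℝ)) := by
      have hnat := sum_gcd_pow_le (n := n) d
      have : ∑ c : ZMod n, G c = ((∑ c ∈ univ.filter (· ≠ (0:ZMod n)), (n.gcd c.val)^d : ℕ) : ℝ) := by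
        rw [hG, ← Finset.sum_filter]
        push_cast
        rfl
      rw [this]
      calc (n.minFac : ℝ)^(d-1) * ((∑ c ∈ univ.filter (· ≠ (0:ZMod n)), (n.gcd c.val)^d : ℕ) : ℝ)
          = ((n.minFac ^ (d-1) * ∑ c ∈ univ.filter (· ≠ (0:ZMod n)), (n.gcd c.val)^d : ℕ) : ℝ) := by
            push_cast; ring
        _ ≤ ((n^(d-1) * (n * n.divisors.card) : ℕ) : ℝ) := by exact_mod_cast hnat
        _ = (n:ℝ)^(d-1) * ((n:ℝ) * (n.divisors.card : ℝ)) := by push_cast; ring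
    -- combine
    have hγ0 : (0:ℝ) < (n.minFac : ℝ)^(d-1) := by
      have : 0 < n.minFac := Nat.minFac_pos n
      positivity
    have hkey : (k:ℝ) * ((n:ℝ)^(d+k-1) * ∑ c : ZMod n, G c) ≤ A^2 := by
      have hGs : 0 ≤ ∑ c : ZMod n, G c := Finset.sum_nonneg (fun c _ => hGnn c)
      have h1 : (k:ℝ) * ((n:ℝ)^(d+k-1) * ∑ c : ZMod n, G c) * (n.minFac : ℝ)^(d-1)
          ≤ (k:ℝ) * ((n:ℝ)^(d+k-1) * ((n:ℝ)^(d-1) * ((n:ℝ) * (n.divisors.card : ℝ)))) := by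
        have := mul_le_mul_of_nonneg_left hGsum (by positivity : (0:ℝ) ≤ (k:ℝ) * (n:ℝ)^(d+k-1))
        calc (k:ℝ) * ((n:ℝ)^(d+k-1) * ∑ c : ZMod n, G c) * (n.minFac : ℝ)^(d-1)
            = ((k:ℝ) * (n:ℝ)^(d+k-1)) * ((n.minFac : ℝ)^(d-1) * ∑ c : ZMod n, G c) := by ring
          _ ≤ ((k:ℝ) * (n:ℝ)^(d+k-1)) * ((n:ℝ)^(d-1) * ((n:ℝ) * (n.divisors.card : ℝ))) := this
          _ = (k:ℝ) * ((n:ℝ)^(d+k-1) * ((n:ℝ)^(d-1) * ((n:ℝ) * (n.divisors.card : ℝ)))) := by ring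
      have h2 : (k:ℝ) * ((n:ℝ)^(d+k-1) * ((n:ℝ)^(d-1) * ((n:ℝ) * (n.divisors.card : ℝ))))
          = (k:ℝ) * (n.divisors.card : ℝ) * (n:ℝ)^(2*d+k-1) := by
        have hexp : (d+k-1) + (d-1) + 1 = 2*d+k-1 := by omega
        rw [← hexp, pow_add, pow_add, pow_one]
        ring
      have h3 : (k:ℝ) * ((n:ℝ)^(d+k-1) * ∑ c : ZMod n, G c) * (n.minFac : ℝ)^(d-1)
          ≤ A^2 * (n.minFac : ℝ)^(d-1) := by
        calc (k:ℝ) * ((n:ℝ)^(d+k-1) * ∑ c : ZMod n, G c) * (n.minFac : ℝ)^(d-1)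
            ≤ (k:ℝ) * (n.divisors.card : ℝ) * (n:ℝ)^(2*d+k-1) := by rw [← h2]; exact h1
          _ ≤ A^2 * (n.minFac : ℝ)^(d-1) := hA2
      exact le_of_mul_le_mul_right h3 hγ0
    calc ∑ s ∈ univ.erase 0, T s
        ≤ ∑ j : Fin k, ∑ s : Fin k → ZMod n, (if s j ≠ 0 then T s else 0) := step1
      _ ≤ ∑ j : Fin k, (A^(k-1) * ((n:ℝ)^d * A)) * ((n:ℝ)^(k-1) * ∑ c : ZMod n, G c) :=
          Finset.sum_le_sum (fun j _ => step2 j)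
      _ = (k:ℝ) * ((A^(k-1) * ((n:ℝ)^d * A)) * ((n:ℝ)^(k-1) * ∑ c : ZMod n, G c)) := by
          rw [Finset.sum_const, Finset.card_univ, Fintype.card_fin, nsmul_eq_mul]
      _ = (A^(k-1) * A) * ((k:ℝ) * ((n:ℝ)^(d+k-1) * ∑ c : ZMod n, G c)) := by
          rw [show d + k - 1 = d + (k-1) from by omega, pow_add]
          ring
      _ ≤ (A^(k-1) * A) * A^2 := by
          apply mul_le_mul_of_nonneg_left hkey (by positivity)
      _ = A^(k+2) := by
          rw [show k + 2 = (k-1) + 1 + 2 from by omega]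
          ring
  rw [hsplit, hT0]
  linarith [hrest]

end final


theorem stmt18 (k d : ℕ) (hk : 1 ≤ k) (hkd : k ≤ d) :
    ∃ C > (0 : ℝ), ∃ c > (0 : ℝ), ∀ (n : ℕ) [NeZero n], Odd n → 3 ≤ n →
      ∀ E : Finset (Fin d → ZMod n),
      (E.card : ℝ) ≥ C * Real.sqrt (n.divisors.card) *
          (n : ℝ) ^ ((d : ℝ) + ((k : ℝ) - 1) / 2) /
          (n.minFac : ℝ) ^ (((d : ℝ) - 1) / 2) →
      (1 / (E.card : ℝ) ^ k) *
        ∑ y ∈ Fintype.piFinset (fun _ : Fin k => E),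
          ((E.image (fun x => fun i : Fin k => dot x (y i))).card : ℝ)
        ≥ c * (n : ℝ) ^ k := by
  have hd : 1 ≤ d := le_trans hk hkd
  refine ⟨(k:ℝ), by exact_mod_cast Nat.pos_of_ne_zero (by omega), 1/2, by norm_num, ?_⟩
  intro n _ hodd hn3 E hE
  set τR := (n.divisors.card : ℝ) with hτR
  set γR := (n.minFac : ℝ) with hγR
  set nR := (n : ℝ) with hnR
  set A := (E.card : ℝ) with hA
  have hn0 : (0:ℝ) < nR := by
    have h3 : ((3:ℕ):ℝ) ≤ (n:ℝ) := Nat.cast_le.2 hn3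
    rw [hnR]; norm_num at h3 ⊢; linarith
  have hγ0 : (0:ℝ) < γR := by
    rw [hγR]; exact_mod_cast Nat.minFac_pos n
  have hτ0 : (0:ℝ) < τR := by
    rw [hτR]
    have : n ∈ n.divisors := Nat.mem_divisors_self n (by omega)
    exact_mod_cast Finset.card_pos.2 ⟨n, this⟩
  set x : ℝ := (d : ℝ) + ((k : ℝ) - 1) / 2 with hx
  set z : ℝ := ((d : ℝ) - 1) / 2 with hz
  have hBpos : (0:ℝ) < (k:ℝ) * Real.sqrt τR * nR ^ x := by
    have hk0 : (0:ℝ) < (k:ℝ) := by exact_mod_cast Nat.pos_of_ne_zero (by omega)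
    have := Real.sqrt_pos.2 hτ0
    have := Real.rpow_pos_of_pos hn0 x
    positivity
  have hγz : (0:ℝ) < γR ^ z := Real.rpow_pos_of_pos hγ0 z
  have hA0 : (0:ℝ) < A := lt_of_lt_of_le (div_pos hBpos hγz) hE
  -- square the hypothesis
  have hsq : ((k:ℝ) * Real.sqrt τR * nR ^ x) ^ 2 / (γR ^ z) ^ 2 ≤ A ^ 2 := by
    rw [← div_pow]
    exact pow_le_pow_left₀ (le_of_lt (div_pos hBpos hγz)) hE 2
  rw [div_le_iff₀ (by positivity)] at hsq
  have e1 : (nR ^ x) ^ 2 = nR ^ (2*d+k-1 : ℕ) := by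
    rw [← Real.rpow_natCast (nR ^ x) 2, ← Real.rpow_mul hn0.le]
    have hc : x * ((2:ℕ):ℝ) = ((2*d+k-1 : ℕ):ℝ) := by
      have h1 : (1:ℕ) ≤ 2*d+k := by omega
      rw [Nat.cast_sub h1]
      push_cast
      rw [hx]
      ring
    rw [hc, Real.rpow_natCast]
  have e2 : (γR ^ z) ^ 2 = γR ^ (d-1 : ℕ) := by
    rw [← Real.rpow_natCast (γR ^ z) 2, ← Real.rpow_mul hγ0.le]
    have hc : z * ((2:ℕ):ℝ) = ((d-1 : ℕ):ℝ) := by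
      rw [Nat.cast_sub hd]
      push_cast
      rw [hz]
      ring
    rw [hc, Real.rpow_natCast]
  have hsq2 : (k:ℝ)^2 * τR * nR ^ (2*d+k-1 : ℕ) ≤ A^2 * γR ^ (d-1 : ℕ) := by
    have hlhs : ((k:ℝ) * Real.sqrt τR * nR ^ x) ^ 2 = (k:ℝ)^2 * τR * (nR ^ x)^2 := by
      rw [mul_pow, mul_pow, Real.sq_sqrt hτ0.le]
    rw [hlhs, e1] at hsq
    rw [e2] at hsq
    exact hsq
  have hA2 : (k:ℝ) * τR * nR ^ (2*d+k-1 : ℕ) ≤ A^2 * γR ^ (d-1 : ℕ) := by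
    have hk1 : (1:ℝ) ≤ (k:ℝ) := by exact_mod_cast hk
    have : (k:ℝ) * τR * nR ^ (2*d+k-1 : ℕ) ≤ (k:ℝ)^2 * τR * nR ^ (2*d+k-1 : ℕ) := by
      have hp : (0:ℝ) ≤ τR * nR ^ (2*d+k-1 : ℕ) := by positivity
      have : (k:ℝ) ≤ (k:ℝ)^2 := by nlinarith
      calc (k:ℝ) * τR * nR ^ (2*d+k-1 : ℕ) = (k:ℝ) * (τR * nR ^ (2*d+k-1 : ℕ)) := by ring
        _ ≤ (k:ℝ)^2 * (τR * nR ^ (2*d+k-1 : ℕ)) := mul_le_mul_of_nonneg_right this hp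
        _ = (k:ℝ)^2 * τR * nR ^ (2*d+k-1 : ℕ) := by ring
    linarith
  -- main inequalities
  set P1 := Fintype.piFinset (fun _ : Fin k => E) with hP1
  have hS := S_bound (n := n) (d := d) (k := k) hk hd E hA2
  have hCS : ((P1.card : ℝ) * A) ^ 2
      ≤ (∑ y ∈ P1, (((E ×ˢ E).filter
          (fun p => (fun i : Fin k => dot p.1 (y i)) = (fun i : Fin k => dot p.2 (y i)))).card : ℝ))
        * (∑ y ∈ P1, ((E.image (fun x => fun i : Fin k => dot x (y i))).card : ℝ)) :=
    cs_count P1 E (fun y x => fun i : Fin k => dot x (y i))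
  set Ssum := ∑ y ∈ P1, (((E ×ˢ E).filter
      (fun p => (fun i : Fin k => dot p.1 (y i)) = (fun i : Fin k => dot p.2 (y i)))).card : ℝ) with hSs
  set P := ∑ y ∈ P1, ((E.image (fun x => fun i : Fin k => dot x (y i))).card : ℝ) with hP
  have hP0 : (0:ℝ) ≤ P := Finset.sum_nonneg (fun y _ => Nat.cast_nonneg _)
  have hcard : (P1.card : ℝ) = A ^ k := by
    rw [hP1, Fintype.card_piFinset, Finset.prod_const, Finset.card_univ, Fintype.card_fin]
    push_cast
    rfl
  rw [hcard] at hCS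
  -- combine
  have hchain : nR ^ k * (A ^ k * A) ^ 2 ≤ 2 * A ^ (k+2) * P := by
    calc nR ^ k * (A ^ k * A) ^ 2 ≤ nR ^ k * (Ssum * P) :=
          mul_le_mul_of_nonneg_left hCS (by positivity)
      _ = (nR ^ k * Ssum) * P := by ring
      _ ≤ (2 * A ^ (k+2)) * P := mul_le_mul_of_nonneg_right hS hP0
      _ = 2 * A ^ (k+2) * P := by ring
  have hfinal : nR ^ k * A ^ k ≤ 2 * P := by
    have hpos : (0:ℝ) < A ^ (k+2) := pow_pos hA0 _
    have h4 : (nR ^ k * A ^ k) * A ^ (k+2) ≤ (2 * P) * A ^ (k+2) := by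
      calc (nR ^ k * A ^ k) * A ^ (k+2) = nR ^ k * (A ^ k * A) ^ 2 := by ring
        _ ≤ 2 * A ^ (k+2) * P := hchain
        _ = (2 * P) * A ^ (k+2) := by ring
    exact le_of_mul_le_mul_right h4 hpos
  have hAk : (0:ℝ) < A ^ k := pow_pos hA0 k
  have hgoal : 1/2 * nR ^ k * A ^ k ≤ P := by linarith
  calc 1/2 * nR ^ k = (1/2 * nR ^ k * A ^ k) / A ^ k := by field_simp
    _ ≤ P / A ^ k := by gcongr
    _ = 1 / A ^ k * P := by ring
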